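/- arXiv:1908.00857 — 2 statements merged into one kernel-verified Lean document; each statement's English description precedes it below -/
import Mathlib

section
/- Let p, q, r be integers with p ≠ 0, gcd(p, q) = 1, |p| ≥ q ≥ 1, r ≥ 2 and r even, and set n = qr, m = |p|·r. Write x ∈ ℤ^n as the concatenation of q blocks b_1, …, b_q ∈ ℤ^r (so b_j = (x_{(j−1)r+1}, …, x_{jr})). Then T_n^m(x) = x if and only if b_1 = b_2 = ⋯ = b_q and Δ(b_1) = 0. -/
/-- The twist map `T_n : ℤ^n → ℤ^n`,
`T_n(x_1,…,x_n) = (2x_1 − x_2, 2x_1 − x_3, …, 2x_1 − x_n, x_1)` (0-indexed). -/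
def twist (n : ℕ) (x : Fin n → ℤ) : Fin n → ℤ :=
  fun i => if h : (i : ℕ) + 1 < n then 2 * x ⟨0, i.pos⟩ - x ⟨(i : ℕ) + 1, h⟩ else x ⟨0, i.pos⟩

/-- The `j`-th block (of length `R`) of a vector `x ∈ ℤ^{QR}`. -/
def blk (Q R : ℕ) (x : Fin (Q * R) → ℤ) (j : Fin Q) (i : Fin R) : ℤ :=
  x ⟨(j : ℕ) * R + (i : ℕ), by
    calc (j : ℕ) * R + (i : ℕ) < (j : ℕ) * R + R := Nat.add_lt_add_left i.2 _
      _ = ((j : ℕ) + 1) * R := (Nat.succ_mul _ _).symm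
      _ ≤ Q * R := Nat.mul_le_mul_right R j.2⟩

/-- `Δ(a) = a_1 − a_2 + a_3 − ⋯ + (−1)^{r+1} a_r` (0-indexed signs `(−1)^i`). -/
def delta (R : ℕ) (a : Fin R → ℤ) : ℤ := ∑ i : Fin R, (-1 : ℤ) ^ (i : ℕ) * a i

/-!
Reading the indices of `x` in `ℤ/n`, the twist is `x ↦ 2 x₀ − x(· + 1)`, so two twists are the
cyclic shift by two followed by adding the constant `2 (x₀ − x₁)`. Hence for even `m`,
`T^m x = x(· + m) + 2 S` with `S = ∑_{t<m} (−1)^t x_t`. Summing over all coordinates forces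
`S = 0`, so `T^m x = x` iff `x` is `m`-periodic and `S = 0`. As `gcd(|p| r, q r) = r`, being
`m`-periodic is being `r`-periodic, i.e. having equal blocks, and then `S = |p| Δ(b₁)`.
-/

open Finset Function

theorem Function.Periodic.sum_range_mul {M : Type*} [AddCommMonoid M] {g : ℕ → M} {R : ℕ}
    (h : Periodic g R) (P : ℕ) : ∑ t ∈ range (P * R), g t = P • ∑ t ∈ range R, g t := by
  induction P with
  | zero => simp
  | succ P ih =>
    rw [add_mul, one_mul, sum_range_add, ih, succ_nsmul]
    congr 1
    exact sum_congr rfl fun t _ => by rw [add_comm]; exact h.nat_mul P t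

section
open Fin.CommRing

variable {n : ℕ} [NeZero n]

theorem twist_apply (x : Fin n → ℤ) (i : Fin n) : twist n x i = 2 * x 0 - x (i + 1) := by
  have h0 : (⟨0, i.pos⟩ : Fin n) = 0 := rfl
  unfold twist
  split_ifs with h
  · congr 2
    ext; simp [Fin.val_add, Nat.mod_eq_of_lt h]
  · have hwrap : i + 1 = 0 := by
      ext
      rw [Fin.val_add, Fin.val_one', Nat.add_mod_mod, show (i : ℕ) + 1 = n by omega, Nat.mod_self,
        Fin.val_zero]
    rw [hwrap, h0]; ring

theorem twist_twist (x : Fin n → ℤ) (i : Fin n) :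
    twist n (twist n x) i = x (i + 2) + 2 * (x 0 - x 1) := by
  rw [twist_apply, twist_apply, twist_apply, zero_add, show i + 1 + 1 = i + 2 by ring]
  ring

theorem twist_iterate_two_mul (x : Fin n → ℤ) (k : ℕ) :
    (twist n)^[2 * k] x =
      fun i => x (i + (2 * k : ℕ)) + 2 * ∑ t ∈ range (2 * k), (-1) ^ t * x t := by
  induction k with
  | zero => funext i; simp
  | succ k ih =>
    funext i
    rw [mul_add, mul_one, iterate_succ_apply', iterate_succ_apply', ih, twist_twist,
      sum_range_succ, sum_range_succ, (even_two_mul k).neg_one_pow,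
      (even_two_mul k).add_one.neg_one_pow, zero_add,
      show i + 2 + ((2 * k : ℕ) : Fin n) = i + ((2 * k + 2 : ℕ) : Fin n) by push_cast; ring,
      show (1 : Fin n) + ((2 * k : ℕ) : Fin n) = ((2 * k + 1 : ℕ) : Fin n) by push_cast; ring]
    ring

theorem iterate_twist_eq_self_iff {m : ℕ} (hm : Even m) (x : Fin n → ℤ) :
    (twist n)^[m] x = x ↔ Periodic x (m : Fin n) ∧ ∑ t ∈ range m, (-1) ^ t * x t = 0 := by
  obtain ⟨k, rfl⟩ := hm
  rw [← two_mul, twist_iterate_two_mul]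
  set S := ∑ t ∈ range (2 * k), (-1) ^ t * x t
  constructor
  · intro h
    have hshift : ∀ i, x (i + (2 * k : ℕ)) + 2 * S = x i := fun i => congrFun h i
    have hS : S = 0 := by
      have hsum := sum_congr rfl fun i (_ : i ∈ univ) => hshift i
      rw [sum_add_distrib, Fintype.sum_equiv (Equiv.addRight _) (fun i => x (i + _)) x
        fun _ => rfl, sum_const, card_univ, Fintype.card_fin, nsmul_eq_mul] at hsum
      simpa [NeZero.ne n] using hsum
    exact ⟨fun i => by simpa [hS] using hshift i, hS⟩
  · rintro ⟨hper, hS⟩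
    funext i
    rw [hper i, hS, mul_zero, add_zero]

theorem Function.Periodic.natCast_gcd {α : Type*} {f : Fin n → α} {a : ℕ}
    (h : Periodic f (a : Fin n)) : Periodic f (Nat.gcd a n : Fin n) := by
  have hgcd : ((Nat.gcd a n : ℕ) : Fin n) = (Nat.gcdA a n : Fin n) * a := by
    have := congrArg (Int.cast : ℤ → Fin n) (Nat.gcd_eq_gcd_ab a n)
    push_cast at this
    rw [this, Fin.natCast_self, zero_mul, add_zero, mul_comm]
  rw [hgcd]
  exact h.int_mul _

theorem periodic_natCast_mul_iff {α : Type*} {P Q R : ℕ} [NeZero (Q * R)] (hPQ : P.Coprime Q)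
    {f : Fin (Q * R) → α} :
    Periodic f ((P * R : ℕ) : Fin (Q * R)) ↔ Periodic f (R : Fin (Q * R)) := by
  refine ⟨fun h => ?_, fun h => by simpa using h.nat_mul P⟩
  simpa [Nat.gcd_mul_right, hPQ.gcd_eq_one] using h.natCast_gcd

theorem periodic_neg_one_pow_mul {x : Fin n → ℤ} {R : ℕ} (hR : Even R)
    (h : Periodic x (R : Fin n)) : Periodic (fun t : ℕ => (-1) ^ t * x t) R := fun t => by
  simp only [pow_add, hR.neg_one_pow, Nat.cast_add, h t, mul_one]

end

section
open Fin.CommRing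

variable {Q R : ℕ} [NeZero (Q * R)]

theorem blk_eq_natCast (x : Fin (Q * R) → ℤ) (j : Fin Q) (i : Fin R) :
    blk Q R x j i = x ((j * R + i : ℕ) : Fin (Q * R)) :=
  congrArg x (Fin.cast_val_eq_self _).symm

theorem blk_eq_of_periodic {x : Fin (Q * R) → ℤ} (h : Periodic x (R : Fin (Q * R)))
    (j : Fin Q) (i : Fin R) : blk Q R x j i = x (i : ℕ) := by
  rw [blk_eq_natCast, Nat.cast_add, Nat.cast_mul, add_comm]
  exact h.nat_mul j _

theorem periodic_of_blk_eq {x : Fin (Q * R) → ℤ} {a : Fin R → ℤ}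
    (h : ∀ j i, blk Q R x j i = a i) : Periodic x (R : Fin (Q * R)) := by
  have hR : 0 < R := Nat.pos_of_ne_zero (right_ne_zero_of_mul (NeZero.ne (Q * R)))
  have hx : ∀ k : Fin (Q * R), x k = a ⟨k % R, Nat.mod_lt _ hR⟩ := fun k => by
    rw [← h ⟨k / R, Nat.div_lt_of_lt_mul (mul_comm Q R ▸ k.2)⟩, blk_eq_natCast,
      Nat.div_add_mod', Fin.cast_val_eq_self]
  intro k
  rw [hx, hx]
  congr 2
  rw [Fin.val_add, Fin.val_natCast, Nat.mod_mod_of_dvd _ (dvd_mul_left R Q), Nat.add_mod,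
    Nat.mod_mod_of_dvd R (dvd_mul_left R Q), Nat.mod_self, add_zero, Nat.mod_mod]

theorem delta_eq_of_blk_eq {x : Fin (Q * R) → ℤ} {a : Fin R → ℤ}
    (h : ∀ j i, blk Q R x j i = a i) : delta R a = ∑ t ∈ range R, (-1) ^ t * x t := by
  have hQ : 0 < Q := Nat.pos_of_ne_zero (left_ne_zero_of_mul (NeZero.ne (Q * R)))
  rw [delta, ← Fin.sum_univ_eq_sum_range]
  exact sum_congr rfl fun i _ => by rw [← h ⟨0, hQ⟩ i, blk_eq_natCast, zero_mul, zero_add]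

theorem exists_blk_eq_iff (x : Fin (Q * R) → ℤ) :
    (∃ a : Fin R → ℤ, delta R a = 0 ∧ ∀ j i, blk Q R x j i = a i) ↔
      Periodic x (R : Fin (Q * R)) ∧ ∑ t ∈ range R, (-1) ^ t * x t = 0 := by
  constructor
  · rintro ⟨a, hΔ, ha⟩
    exact ⟨periodic_of_blk_eq ha, delta_eq_of_blk_eq ha ▸ hΔ⟩
  · rintro ⟨hper, hsum⟩
    have ha := blk_eq_of_periodic hper
    exact ⟨_, (delta_eq_of_blk_eq ha).trans hsum, ha⟩

end

theorem stmt_5_general (p q r : ℤ) (hp : p ≠ 0) (hgcd : Int.gcd p q = 1)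
    (hq1 : 1 ≤ q) (hr2 : 2 ≤ r) (hre : Even r)
    (Q R m : ℕ) (hQ : (Q : ℤ) = q) (hR : (R : ℤ) = r) (hm : (m : ℤ) = |p| * r)
    (x : Fin (Q * R) → ℤ) :
    (twist (Q * R))^[m] x = x ↔
      ∃ a : Fin R → ℤ, delta R a = 0 ∧ ∀ (j : Fin Q) (i : Fin R), blk Q R x j i = a i := by
  have hmPR : m = p.natAbs * R := by zify; rw [hm, hR]
  have hcop : p.natAbs.Coprime Q := by rwa [← Int.natAbs_natCast Q, hQ]
  have hRe : Even R := by rwa [← Int.even_coe_nat, hR]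
  have : NeZero (Q * R) := ⟨Nat.mul_ne_zero (by omega) (by omega)⟩
  subst hmPR
  rw [iterate_twist_eq_self_iff (hRe.mul_left _), periodic_natCast_mul_iff hcop, exists_blk_eq_iff]
  refine and_congr_right fun hper => ?_
  rw [(periodic_neg_one_pow_mul hRe hper).sum_range_mul, nsmul_eq_mul, mul_eq_zero]
  simp [hp]

theorem stmt_5 (p q r : ℤ) (hp : p ≠ 0) (hgcd : Int.gcd p q = 1)
    (hq1 : 1 ≤ q) (hqp : q ≤ |p|) (hr2 : 2 ≤ r) (hre : Even r)
    (Q R m : ℕ) (hQ : (Q : ℤ) = q) (hR : (R : ℤ) = r) (hm : (m : ℤ) = |p| * r)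
    (x : Fin (Q * R) → ℤ) :
    (twist (Q * R))^[m] x = x ↔
      ∃ a : Fin R → ℤ, delta R a = 0 ∧ ∀ (j : Fin Q) (i : Fin R), blk Q R x j i = a i :=
  stmt_5_general p q r hp hgcd hq1 hr2 hre Q R m hQ hR hm x
end

section
/- Let n ≥ 1 and let τ : ℤ^n → ℤ^n be the kink map of the rack (ℤ^n, ◁), τ(x) = x ◁ x; τ is a bijection, so its iterates τ^w are defined for all integers w. Then for every integer w: (i) if n is even, { a ∈ ℤ^n : τ^w(a) = a } = { a ∈ ℤ^n : w·(a_1 − a_2 + a_3 − ⋯ − a_n) = 0 }; (ii) if n is odd and w is odd, { a ∈ ℤ^n : τ^w(a) = a } = { (t, t, …, t) : t ∈ ℤ }; (iii) if n is odd and w is even, { a ∈ ℤ^n : τ^w(a) = a } = ℤ^n. Moreover, if n is odd then τ ∘ τ is the identity of ℤ^n. -/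
/-!
Unfolding the fold gives `x ◁ y = (-1)^n (x - 2 A(y) 𝟙)`, where `A` is the alternating
coordinate sum and `𝟙` the all-ones vector, and `A` is invariant under the kink map `τ`.
For even `n` this makes `τ` the shear `a ↦ a - 2 A(a) 𝟙`, so `τ^w a = a - 2 w A(a) 𝟙`.
For odd `n`, `τ a = 2 A(a) 𝟙 - a` is an involution whose fixed points are the constant vectors.
-/

/-- The rack operation `◁` on `ℤ^n`:
`(x ◁ y)_i = (((x_i ∗ y_1) ∗ y_2) ⋯) ∗ y_n`, where `a ∗ b = 2b − a`. -/
def tri (n : ℕ) (x y : Fin n → ℤ) : Fin n → ℤ :=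
  fun i => (List.ofFn y).foldl (fun a b => 2 * b - a) (x i)

theorem List.foldl_two_mul_sub {R : Type*} [CommRing R] (l : List R) (c : R) :
    l.foldl (fun a b => 2 * b - a) c = (-1) ^ l.length * (c - 2 * l.alternatingSum) := by
  induction l generalizing c with
  | nil => simp
  | cons b l ih => rw [foldl_cons, ih, length_cons, alternatingSum_cons, pow_succ]; ring

theorem List.alternatingSum_ofFn {R : Type*} [CommRing R] {n : ℕ} (y : Fin n → R) :
    (ofFn y).alternatingSum = ∑ j : Fin n, (-1) ^ (j : ℕ) * y j := by
  induction n with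
  | zero => simp
  | succ n ih =>
    rw [ofFn_succ, alternatingSum_cons, ih, Fin.sum_univ_succ, sub_eq_add_neg,
      ← Finset.sum_neg_distrib]
    simp [pow_succ]

theorem Equiv.Perm.zpow_apply_eq_of_succ {α : Type*} (e : Perm α) (f : ℤ → α → α)
    (h0 : ∀ a, f 0 a = a) (hsucc : ∀ w a, e (f w a) = f (w + 1) a) (w : ℤ) (a : α) :
    (e ^ w) a = f w a := by
  induction w using Int.induction_on with
  | zero => simp [h0]
  | succ k ih => rw [add_comm, zpow_one_add, mul_apply, ih, hsucc, add_comm]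
  | pred k ih =>
    apply e.injective
    rw [← mul_apply, ← zpow_one_add, hsucc, add_sub_cancel, ih, sub_add_cancel]

section Involution

variable {G : Type*} [Group G] {g : G} {w : ℤ}

theorem zpow_eq_self_of_mul_self_eq_one (hg : g * g = 1) (hw : Odd w) : g ^ w = g := by
  obtain ⟨k, rfl⟩ := hw
  rw [zpow_add_one, zpow_mul, zpow_two, hg, one_zpow, one_mul]

theorem zpow_eq_one_of_mul_self_eq_one (hg : g * g = 1) (hw : Even w) : g ^ w = 1 := by
  obtain ⟨k, rfl⟩ := hw
  rw [← two_mul, zpow_mul, zpow_two, hg, one_zpow]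

end Involution

def altSum (n : ℕ) (a : Fin n → ℤ) : ℤ := ∑ j : Fin n, (-1) ^ (j : ℕ) * a j

def altShift (n : ℕ) (w : ℤ) (a : Fin n → ℤ) : Fin n → ℤ :=
  fun i => a i - 2 * w * altSum n a

section Kink

variable {n : ℕ}

theorem tri_apply (x y : Fin n → ℤ) (i : Fin n) :
    tri n x y i = (-1) ^ n * (x i - 2 * altSum n y) := by
  rw [tri, List.foldl_two_mul_sub, List.length_ofFn, List.alternatingSum_ofFn, altSum]

theorem altSum_const (t : ℤ) : altSum n (fun _ => t) = if Even n then 0 else t := by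
  rw [altSum, ← Finset.sum_mul, Fin.sum_univ_eq_sum_range (fun j => (-1 : ℤ) ^ j),
    neg_one_geom_sum]
  split_ifs <;> simp

theorem altSum_mul_sub (a : Fin n → ℤ) (c d : ℤ) :
    altSum n (fun i => c * (a i - d)) = c * (altSum n a - altSum n (fun _ => d)) := by
  simp only [altSum, mul_sub, Finset.mul_sum, ← Finset.sum_sub_distrib]
  exact Finset.sum_congr rfl fun j _ => by ring

theorem altSum_tri_self (a : Fin n → ℤ) : altSum n (tri n a a) = altSum n a := by
  simp only [funext (tri_apply a a), altSum_mul_sub, altSum_const]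
  rcases Nat.even_or_odd n with hn | hn
  · simp [hn, hn.neg_one_pow]
  · simp [Nat.not_even_iff_odd.2 hn, hn.neg_one_pow]
    ring

theorem tri_self_involutive (hn : Odd n) :
    Function.Involutive (fun x : Fin n → ℤ => tri n x x) := by
  intro a
  funext i
  simp only [tri_apply, altSum_tri_self, hn.neg_one_pow]
  ring

theorem tri_self_eq_self_iff (hn : Odd n) (a : Fin n → ℤ) :
    tri n a a = a ↔ ∃ t, ∀ i, a i = t := by
  simp only [funext_iff, tri_apply, hn.neg_one_pow]
  constructor
  · exact fun h => ⟨altSum n a, fun i => by linarith [h i]⟩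
  · rintro ⟨t, ht⟩ i
    have hA : altSum n a = t := by
      rw [show a = fun _ => t from funext ht, altSum_const, if_neg (Nat.not_even_iff_odd.2 hn)]
    rw [hA, ht]
    ring

theorem altSum_altShift (hn : Even n) (w : ℤ) (a : Fin n → ℤ) :
    altSum n (altShift n w a) = altSum n a := by
  unfold altShift
  simpa only [one_mul, altSum_const, if_pos hn, sub_zero] using
    altSum_mul_sub a 1 (2 * w * altSum n a)

theorem altShift_zero (a : Fin n → ℤ) : altShift n 0 a = a := by
  funext i
  simp [altShift]

theorem altShift_altShift (hn : Even n) (v w : ℤ) (a : Fin n → ℤ) :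
    altShift n v (altShift n w a) = altShift n (v + w) a := by
  funext i
  simp only [altShift, altSum_altShift hn]
  ring

theorem altShift_eq_self_iff (w : ℤ) (a : Fin n → ℤ) :
    altShift n w a = a ↔ w * altSum n a = 0 := by
  have hcoord : altShift n w a = a ↔ ∀ _ : Fin n, w * altSum n a = 0 := by
    simp only [altShift, funext_iff, sub_eq_self, mul_assoc, mul_eq_zero, two_ne_zero, false_or]
  rw [hcoord]
  cases n with
  | zero => simp [altSum]
  | succ n => exact ⟨fun h => h 0, fun h _ => h⟩

theorem tri_self_eq_altShift (hn : Even n) (a : Fin n → ℤ) : tri n a a = altShift n 1 a := by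
  funext i
  rw [tri_apply, hn.neg_one_pow, altShift]
  ring

theorem tri_self_bijective (n : ℕ) : Function.Bijective (fun x : Fin n → ℤ => tri n x x) := by
  rcases Nat.even_or_odd n with hn | hn
  · refine Function.bijective_iff_has_inverse.2 ⟨altShift n (-1), fun a => ?_, fun a => ?_⟩
    · simp only [tri_self_eq_altShift hn, altShift_altShift hn, neg_add_cancel, altShift_zero]
    · simp only [tri_self_eq_altShift hn, altShift_altShift hn, add_neg_cancel, altShift_zero]
  · exact (tri_self_involutive hn).bijective

end Kink

theorem stmt_16_general (n : ℕ) :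
    Function.Bijective (fun x : Fin n → ℤ => tri n x x) ∧
    (∀ e : Equiv.Perm (Fin n → ℤ), (∀ x, e x = tri n x x) →
      ∀ w : ℤ,
        (Even n →
          {a : Fin n → ℤ | (e ^ w) a = a}
            = {a : Fin n → ℤ | w * (∑ j : Fin n, (-1 : ℤ) ^ (j : ℕ) * a j) = 0}) ∧
        (Odd n → Odd w →
          {a : Fin n → ℤ | (e ^ w) a = a} = {a : Fin n → ℤ | ∃ t : ℤ, ∀ i, a i = t}) ∧
        (Odd n → Even w →
          {a : Fin n → ℤ | (e ^ w) a = a} = Set.univ)) ∧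
    (Odd n → (fun x : Fin n → ℤ => tri n x x) ∘ (fun x => tri n x x) = id) := by
  refine ⟨tri_self_bijective n, fun e he w => ?_, fun hn => (tri_self_involutive hn).comp_self⟩
  rcases Nat.even_or_odd n with hn | hn
  · have hpow : ∀ a, (e ^ w) a = altShift n w a :=
      e.zpow_apply_eq_of_succ (altShift n) altShift_zero (fun w a => by
        rw [he, tri_self_eq_altShift hn, altShift_altShift hn, add_comm]) w
    refine ⟨fun _ => ?_, fun h => absurd h (Nat.not_odd_iff_even.2 hn),
      fun h => absurd h (Nat.not_odd_iff_even.2 hn)⟩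
    ext a
    exact (hpow a ▸ altShift_eq_self_iff w a :)
  · have he2 : e * e = 1 := Equiv.ext fun a => by
      simp only [Equiv.Perm.mul_apply, he, Equiv.Perm.one_apply]
      exact tri_self_involutive hn a
    refine ⟨fun h => absurd h (Nat.not_even_iff_odd.2 hn), fun _ hw => ?_, fun _ hw => ?_⟩
    · ext a
      simp only [Set.mem_ofPred_eq, zpow_eq_self_of_mul_self_eq_one he2 hw, he,
        tri_self_eq_self_iff hn]
    · simp [zpow_eq_one_of_mul_self_eq_one he2 hw]

theorem stmt_16 (n : ℕ) (hn : 1 ≤ n) :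
    Function.Bijective (fun x : Fin n → ℤ => tri n x x) ∧
    (∀ e : Equiv.Perm (Fin n → ℤ), (∀ x, e x = tri n x x) →
      ∀ w : ℤ,
        (Even n →
          {a : Fin n → ℤ | (e ^ w) a = a}
            = {a : Fin n → ℤ | w * (∑ j : Fin n, (-1 : ℤ) ^ (j : ℕ) * a j) = 0}) ∧
        (Odd n → Odd w →
          {a : Fin n → ℤ | (e ^ w) a = a} = {a : Fin n → ℤ | ∃ t : ℤ, ∀ i, a i = t}) ∧
        (Odd n → Even w →
          {a : Fin n → ℤ | (e ^ w) a = a} = Set.univ)) ∧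
    (Odd n → (fun x : Fin n → ℤ => tri n x x) ∘ (fun x => tri n x x) = id) :=
  stmt_16_general n
end
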